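/- The L^1 norms of the Dirichlet–Walsh kernels are unbounded: sup over m of ∫_0^1 |D_m(x)| dx = ∞. -/

import Mathlib

/-!
The dyadic self-similarity of the Walsh system, `W_{2n+b}(x) = r_0(x)^b W_n(2x)`, gives
`D_{4m+1}(x) = (1 + r_0(x))(1 + r_0(2x)) D_m(4x) + W_m(4x)`. On `[1/4, 1)` the product vanishes,
so `|D_{4m+1}| = 1` there; on `[0, 1/4)` it equals `4`, so `D_{4m+1}(x) = 4 D_m(4x) + W_m(4x)`,
and since `|W_m| = 1` the integral of its modulus over `[0, 1/4)` is at least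
`‖D_m‖₁ - 1/4`. Hence `‖D_{4m+1}‖₁ ≥ ‖D_m‖₁ + 1/2`, and iterating from `m = 0` makes the norms grow without bound.
-/

open MeasureTheory Filter Finset

/-- The 1-periodic base Rademacher function: `1` on `[0,1/2)`, `-1` on `[1/2,1)`. -/
noncomputable def r0 (x : ℝ) : ℝ := if Int.fract x < 1/2 then 1 else -1

/-- The `k`-th Rademacher function `r_k(x) = r_0(2^k x)`. -/
noncomputable def rad (k : ℕ) (x : ℝ) : ℝ := r0 (2 ^ k * x)

/-- The Walsh–Paley function `W_n`: product of the Rademacher functions `r_k`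
over the bits `k` appearing in the binary expansion of `n`. -/
noncomputable def walsh (n : ℕ) (x : ℝ) : ℝ :=
  ∏ k ∈ Finset.range n, if n.testBit k then rad k x else 1

/-- The Dirichlet–Walsh kernel `D_m(x) = ∑_{i=0}^{m-1} W_i(x)`. -/
noncomputable def walshDirichlet (m : ℕ) (x : ℝ) : ℝ :=
  ∑ i ∈ Finset.range m, walsh i x

open Set

lemma abs_r0 (x : ℝ) : |r0 x| = 1 := by
  unfold r0; split <;> simp

lemma r0_of_mem_Ico_zero_half {x : ℝ} (hx : x ∈ Ico (0 : ℝ) (1 / 2)) : r0 x = 1 := by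
  rw [r0, Int.fract_eq_self.mpr ⟨hx.1, by linarith [hx.2]⟩, if_pos hx.2]

lemma r0_of_mem_Ico_half_one {x : ℝ} (hx : x ∈ Ico (1 / 2 : ℝ) 1) : r0 x = -1 := by
  rw [r0, Int.fract_eq_self.mpr ⟨by linarith [hx.1], hx.2⟩, if_neg (not_lt.mpr hx.1)]

lemma measurable_r0 : Measurable r0 :=
  Measurable.ite (measurableSet_lt measurable_fract measurable_const) measurable_const
    measurable_const

lemma rad_zero : rad 0 = r0 := by
  ext x; simp [rad]

lemma rad_succ (k : ℕ) (x : ℝ) : rad (k + 1) x = rad k (2 * x) := by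
  unfold rad; congr 1; ring

lemma abs_walsh (n : ℕ) (x : ℝ) : |walsh n x| = 1 := by
  rw [walsh, Finset.abs_prod]
  refine Finset.prod_eq_one fun k _ => ?_
  split <;> simp [rad, abs_r0]

lemma measurable_walsh (n : ℕ) : Measurable (walsh n) :=
  Finset.measurable_prod _ fun _ _ =>
    Measurable.ite (MeasurableSet.const _) (measurable_r0.comp (measurable_const_mul _))
      measurable_const

lemma walsh_eq_prod_range {n M : ℕ} (h : n ≤ M) (x : ℝ) :
    walsh n x = ∏ k ∈ Finset.range M, if n.testBit k then rad k x else 1 := by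
  refine Finset.prod_subset (Finset.range_subset_range.mpr h) fun k _ hk => ?_
  have hn : n < 2 ^ k :=
    Nat.lt_two_pow_self.trans_le (Nat.pow_le_pow_right two_pos (by simpa using hk))
  simp [Nat.testBit_lt_two_pow hn]

lemma walsh_bit (b : Bool) (n : ℕ) (x : ℝ) :
    walsh (Nat.bit b n) x = (if b then r0 x else 1) * walsh n (2 * x) := by
  have hbit : Nat.bit b n ≤ 2 * n + 1 := by cases b <;> simp [Nat.bit]
  rw [walsh_eq_prod_range hbit, walsh_eq_prod_range (M := 2 * n) (by omega),
    Finset.prod_range_succ', Nat.testBit_bit_zero, rad_zero, mul_comm]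
  simp only [Nat.testBit_bit_succ, rad_succ]

lemma walsh_two_mul (n : ℕ) (x : ℝ) : walsh (2 * n) x = walsh n (2 * x) := by
  simpa [Nat.bit] using walsh_bit false n x

lemma walsh_two_mul_add_one (n : ℕ) (x : ℝ) :
    walsh (2 * n + 1) x = r0 x * walsh n (2 * x) := by
  simpa [Nat.bit] using walsh_bit true n x

lemma walsh_four_mul (n : ℕ) (x : ℝ) : walsh (4 * n) x = walsh n (4 * x) := by
  rw [show 4 * n = 2 * (2 * n) by ring, walsh_two_mul, walsh_two_mul, ← mul_assoc]
  norm_num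

lemma measurable_walshDirichlet (m : ℕ) : Measurable (walshDirichlet m) :=
  Finset.measurable_sum _ fun i _ => measurable_walsh i

lemma walshDirichlet_succ (m : ℕ) (x : ℝ) :
    walshDirichlet (m + 1) x = walshDirichlet m x + walsh m x :=
  Finset.sum_range_succ _ _

lemma walshDirichlet_two_mul (m : ℕ) (x : ℝ) :
    walshDirichlet (2 * m) x = (1 + r0 x) * walshDirichlet m (2 * x) := by
  induction m with
  | zero => simp [walshDirichlet]
  | succ m ih =>
    rw [show 2 * (m + 1) = 2 * m + 1 + 1 by ring, walshDirichlet_succ, walshDirichlet_succ, ih,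
      walshDirichlet_succ, walsh_two_mul, walsh_two_mul_add_one]
    ring

lemma walshDirichlet_four_mul_add_one (m : ℕ) (x : ℝ) :
    walshDirichlet (4 * m + 1) x =
      (1 + r0 x) * (1 + r0 (2 * x)) * walshDirichlet m (4 * x) + walsh m (4 * x) := by
  rw [walshDirichlet_succ, walsh_four_mul, show 4 * m = 2 * (2 * m) by ring,
    walshDirichlet_two_mul, walshDirichlet_two_mul, show (2 : ℝ) * (2 * x) = 4 * x by ring]
  ring

lemma walshDirichlet_four_mul_add_one_of_mem_Ico_zero_quarter (m : ℕ) {x : ℝ}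
    (hx : x ∈ Ico (0 : ℝ) (1 / 4)) :
    walshDirichlet (4 * m + 1) x = 4 * walshDirichlet m (4 * x) + walsh m (4 * x) := by
  obtain ⟨hx0, hx1⟩ := hx
  rw [walshDirichlet_four_mul_add_one, r0_of_mem_Ico_zero_half ⟨hx0, by linarith⟩,
    r0_of_mem_Ico_zero_half ⟨by linarith, by linarith⟩]
  norm_num

lemma abs_walshDirichlet_four_mul_add_one_of_mem_Ico_quarter_one (m : ℕ) {x : ℝ}
    (hx : x ∈ Ico (1 / 4 : ℝ) 1) : |walshDirichlet (4 * m + 1) x| = 1 := by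
  obtain ⟨hx0, hx1⟩ := hx
  have hvanish : (1 + r0 x) * (1 + r0 (2 * x)) = 0 := by
    rcases lt_or_ge x (1 / 2) with h | h
    · rw [r0_of_mem_Ico_half_one (x := 2 * x) ⟨by linarith, by linarith⟩]; ring
    · rw [r0_of_mem_Ico_half_one ⟨h, hx1⟩]; ring
  rw [walshDirichlet_four_mul_add_one, hvanish, zero_mul, zero_add, abs_walsh]

lemma integrableOn_Ico_of_abs_le {f : ℝ → ℝ} (hf : Measurable f) {C : ℝ}
    (hC : ∀ x, |f x| ≤ C) (a b : ℝ) : IntegrableOn f (Ico a b) :=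
  Measure.integrableOn_of_bounded (by simp [Real.volume_Ico]) hf.aestronglyMeasurable
    (.of_forall hC)

lemma abs_walshDirichlet_le (m : ℕ) (x : ℝ) : |walshDirichlet m x| ≤ m := by
  simpa [walshDirichlet, abs_walsh] using
    Finset.abs_sum_le_sum_abs (fun i => walsh i x) (Finset.range m)

lemma integrableOn_walshDirichlet (m : ℕ) (a b : ℝ) :
    IntegrableOn (walshDirichlet m) (Ico a b) :=
  integrableOn_Ico_of_abs_le (measurable_walshDirichlet m) (abs_walshDirichlet_le m) a b

lemma setIntegral_Ico_comp_mul_left (g : ℝ → ℝ) {a b c : ℝ} (hab : a ≤ b) (hc : 0 < c) :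
    ∫ x in Ico a b, g (c * x) = c⁻¹ * ∫ x in Ico (c * a) (c * b), g x := by
  rw [integral_Ico_eq_integral_Ioo, ← integral_Ioc_eq_integral_Ioo,
    ← intervalIntegral.integral_of_le hab, intervalIntegral.integral_comp_mul_left _ hc.ne',
    intervalIntegral.integral_of_le (by nlinarith), integral_Ioc_eq_integral_Ioo,
    ← integral_Ico_eq_integral_Ioo, smul_eq_mul]

lemma integral_abs_walshDirichlet_four_mul_add_one_Ico_zero_quarter (m : ℕ) :
    (∫ x in Ico (0 : ℝ) 1, |walshDirichlet m x|) - 1 / 4 ≤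
      ∫ x in Ico (0 : ℝ) (1 / 4), |walshDirichlet (4 * m + 1) x| := by
  have hbound : ∀ x ∈ Ico (0 : ℝ) (1 / 4),
      4 * |walshDirichlet m (4 * x)| - 1 ≤ |walshDirichlet (4 * m + 1) x| := by
    intro x hx
    rw [walshDirichlet_four_mul_add_one_of_mem_Ico_zero_quarter m hx]
    have := abs_sub_abs_le_abs_add (4 * walshDirichlet m (4 * x)) (walsh m (4 * x))
    rwa [abs_walsh, abs_mul, abs_of_pos four_pos] at this
  have hrescaled : IntegrableOn (fun x => |walshDirichlet m (4 * x)|) (Ico (0 : ℝ) (1 / 4)) :=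
    integrableOn_Ico_of_abs_le ((measurable_walshDirichlet m).comp (measurable_const_mul 4)).abs
      (fun x => by simpa using abs_walshDirichlet_le m (4 * x)) _ _
  have hone : IntegrableOn (fun _ => (1 : ℝ)) (Ico (0 : ℝ) (1 / 4)) :=
    integrableOn_const (by simp [Real.volume_Ico])
  calc (∫ x in Ico (0 : ℝ) 1, |walshDirichlet m x|) - 1 / 4
      = ∫ x in Ico (0 : ℝ) (1 / 4), (4 * |walshDirichlet m (4 * x)| - 1) := by
        rw [integral_sub, integral_const_mul,
          setIntegral_Ico_comp_mul_left (fun y => |walshDirichlet m y|) (by norm_num) four_pos]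
        · norm_num [Real.volume_Ico, measureReal_def]
          ring
        exacts [hrescaled.const_mul 4, hone]
    _ ≤ ∫ x in Ico (0 : ℝ) (1 / 4), |walshDirichlet (4 * m + 1) x| :=
        setIntegral_mono_on ((hrescaled.const_mul 4).sub hone)
          (integrableOn_walshDirichlet _ _ _).abs measurableSet_Ico hbound

lemma integral_abs_walshDirichlet_four_mul_add_one (m : ℕ) :
    (∫ x in Ico (0 : ℝ) 1, |walshDirichlet m x|) + 1 / 2 ≤
      ∫ x in Ico (0 : ℝ) 1, |walshDirichlet (4 * m + 1) x| := by
  have hint := fun a b => (integrableOn_walshDirichlet (4 * m + 1) a b).abs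
  have hright : ∫ x in Ico (1 / 4 : ℝ) 1, |walshDirichlet (4 * m + 1) x| = 3 / 4 := by
    rw [setIntegral_congr_fun measurableSet_Ico
      (fun x hx => abs_walshDirichlet_four_mul_add_one_of_mem_Ico_quarter_one m hx)]
    norm_num [Real.volume_Ico, measureReal_def]
  have hsplit : ∫ x in Ico (0 : ℝ) 1, |walshDirichlet (4 * m + 1) x| =
      (∫ x in Ico (0 : ℝ) (1 / 4), |walshDirichlet (4 * m + 1) x|) +
        ∫ x in Ico (1 / 4 : ℝ) 1, |walshDirichlet (4 * m + 1) x| := by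
    rw [← setIntegral_union Ico_disjoint_Ico_same measurableSet_Ico (hint _ _) (hint _ _),
      Set.Ico_union_Ico_eq_Ico (by norm_num) (by norm_num)]
  rw [hsplit, hright]
  linarith [integral_abs_walshDirichlet_four_mul_add_one_Ico_zero_quarter m]

lemma exists_half_le_integral_abs_walshDirichlet (n : ℕ) :
    ∃ m, (n : ℝ) / 2 ≤ ∫ x in Ico (0 : ℝ) 1, |walshDirichlet m x| := by
  induction n with
  | zero => exact ⟨0, by simp [walshDirichlet]⟩
  | succ n ih =>
    obtain ⟨m, hm⟩ := ih
    refine ⟨4 * m + 1, ?_⟩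
    push_cast
    linarith [integral_abs_walshDirichlet_four_mul_add_one m]

/-- The `L¹` norms of the Dirichlet–Walsh kernels are unbounded:
`sup_m ∫_0^1 |D_m(x)| dx = ∞`. -/
theorem walshDirichlet_L1_unbounded :
    ∀ C : ℝ, ∃ m : ℕ, C < ∫ x in Set.Ico (0:ℝ) 1, |walshDirichlet m x| := by
  intro C
  obtain ⟨n, hn⟩ := exists_nat_gt (2 * C)
  obtain ⟨m, hm⟩ := exists_half_le_integral_abs_walshDirichlet n
  exact ⟨m, by linarith⟩
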